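/- arXiv:2506.21730 — 5 statements merged into one kernel-verified Lean document; each statement's English description precedes it below -/
import Mathlib

section
/- For every real t > 0 and α > 0, the derivative of ξ(t) = (1 + 2α/t)((t+2α)/(t+1+2α))^{2α} is negative; hence ξ is strictly decreasing on (0,∞). -/
/-!
Writing `r = (t + 2α)/(t + 1 + 2α)`, the derivative factors as
`ξ'(t) = -2α(1 + 2α)(t + 2α) / (t²(t + 1 + 2α)²) · r^(2α - 1)`,
which is negative for `t > 0`, `α > 0`; monotonicity then follows from the mean value theorem.
-/

open Real

noncomputable def xi (α t : ℝ) : ℝ :=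
  (1 + 2 * α / t) * ((t + 2 * α) / (t + 1 + 2 * α)) ^ (2 * α)

lemma hasDerivAt_xi {α t : ℝ} (hα : 0 ≤ α) (ht : 0 < t) :
    HasDerivAt (xi α)
      (-(2 * α * (1 + 2 * α) * (t + 2 * α)) / (t ^ 2 * (t + 1 + 2 * α) ^ 2)
        * ((t + 2 * α) / (t + 1 + 2 * α)) ^ (2 * α - 1)) t := by
  have hden : 0 < t + 1 + 2 * α := by linarith
  have hr : 0 < (t + 2 * α) / (t + 1 + 2 * α) := div_pos (by linarith) hden
  have hratio : HasDerivAt (fun t : ℝ => (t + 2 * α) / (t + 1 + 2 * α))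
      (1 / (t + 1 + 2 * α) ^ 2) t :=
    (((hasDerivAt_id t).add_const _).div
      (((hasDerivAt_id t).add_const 1).add_const (2 * α)) hden.ne').congr_deriv (by simp)
  have hfactor : HasDerivAt (fun t : ℝ => 1 + 2 * α / t) (-(2 * α) / t ^ 2) t := by
    simpa [div_eq_mul_inv] using ((hasDerivAt_inv ht.ne').const_mul (2 * α)).const_add 1
  refine (hfactor.mul (hratio.rpow_const (p := 2 * α) (Or.inl hr.ne'))).congr_deriv ?_
  rw [rpow_sub_one hr.ne']
  field_simp
  ring

lemma deriv_xi_neg {α t : ℝ} (hα : 0 < α) (ht : 0 < t) : deriv (xi α) t < 0 := by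
  rw [(hasDerivAt_xi hα.le ht).deriv]
  have hr : 0 < (t + 2 * α) / (t + 1 + 2 * α) := div_pos (by linarith) (by linarith)
  exact mul_neg_of_neg_of_pos
    (div_neg_of_neg_of_pos (neg_neg_of_pos (by positivity)) (by positivity))
    (rpow_pos_of_pos hr _)

theorem stmt3 (α : ℝ) (hα : 0 < α) :
    (∀ t : ℝ, 0 < t →
      deriv (fun t : ℝ => (1 + 2 * α / t) * ((t + 2 * α) / (t + 1 + 2 * α)) ^ (2 * α)) t < 0) ∧
    StrictAntiOn (fun t : ℝ => (1 + 2 * α / t) * ((t + 2 * α) / (t + 1 + 2 * α)) ^ (2 * α))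
      (Set.Ioi 0) := by
  refine ⟨fun t ht => deriv_xi_neg hα ht, ?_⟩
  refine strictAntiOn_of_deriv_neg (convex_Ioi 0) (fun t ht => ?_) (fun t ht => ?_)
  · exact (hasDerivAt_xi hα.le ht).continuousAt.continuousWithinAt
  · rw [interior_Ioi] at ht
    exact deriv_xi_neg hα ht
end

section
/- Let (E_k)_{k≥0} be a nonnegative real sequence, α > 0, and (δ_k)_{k≥0} a nonnegative sequence such that (k+1+2α)^{2α}(1 + 2α/(k+1)) E_{k+1} − (k+1+2α)^{2α} E_k + δ_k ≤ 0 for all k. Then ∑_{k=0}^∞ δ_k < ∞ and hence lim_{k→∞} δ_k = 0. -/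
/-!
Put `F k = (k+1+2α)^{2α} E k`. With `t = k+1` and `a = 2α`, the bounds
`(1 + 1/(t+a))^a ≤ exp (a/(t+a)) ≤ 1/(1 - a/(t+a)) = 1 + a/t` show that the weight satisfies `(k+2+2α)^{2α} ≤ (k+1+2α)^{2α} (1 + 2α/(k+1))`, so the hypothesis gives
`δ k ≤ F k - F (k+1)`. The partial sums of `δ` are therefore bounded by `F 0`.
-/

open Real Finset

lemma rpow_add_one_le_rpow_mul_one_add_div {t a : ℝ} (ht : 0 < t) (ha : 0 ≤ a) :
    (t + a + 1) ^ a ≤ (t + a) ^ a * (1 + a / t) := by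
  have hta : 0 < t + a := by linarith
  have hratio : (t + a + 1) ^ a = (t + a) ^ a * (1 / (t + a) + 1) ^ a := by
    rw [← mul_rpow hta.le (by positivity)]
    congr 1
    field_simp
    ring
  have hexp : (1 / (t + a) + 1) ^ a ≤ exp (a / (t + a)) := calc
    (1 / (t + a) + 1) ^ a ≤ exp (1 / (t + a)) ^ a :=
      rpow_le_rpow (by positivity) (add_one_le_exp _) ha
    _ = exp (a / (t + a)) := by rw [← exp_mul]; ring_nf
  have hbound : exp (a / (t + a)) ≤ 1 + a / t := calc
    exp (a / (t + a)) ≤ 1 / (1 - a / (t + a)) :=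
      exp_bound_div_one_sub_of_interval (by positivity) ((div_lt_one hta).2 (by linarith))
    _ = 1 + a / t := by field_simp [ht.ne']; ring
  rw [hratio]
  exact mul_le_mul_of_nonneg_left (hexp.trans hbound) (by positivity)

lemma summable_of_le_sub_succ {δ F : ℕ → ℝ} (hδ : ∀ k, 0 ≤ δ k) (hF : ∀ k, 0 ≤ F k)
    (hle : ∀ k, δ k ≤ F k - F (k + 1)) : Summable δ := by
  refine summable_of_sum_range_le (c := F 0) hδ fun n => ?_
  calc ∑ i ∈ range n, δ i ≤ ∑ i ∈ range n, (F i - F (i + 1)) := sum_le_sum fun i _ => hle i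
    _ = F 0 - F n := sum_range_sub' F n
    _ ≤ F 0 := by linarith [hF n]

theorem stmt8 (E δ : ℕ → ℝ) (α : ℝ) (hα : 0 < α)
    (hE : ∀ k, 0 ≤ E k) (hδ : ∀ k, 0 ≤ δ k)
    (hrec : ∀ k : ℕ,
      ((k : ℝ) + 1 + 2 * α) ^ (2 * α) * (1 + 2 * α / ((k : ℝ) + 1)) * E (k + 1)
        - ((k : ℝ) + 1 + 2 * α) ^ (2 * α) * E k + δ k ≤ 0) :
    Summable δ ∧ Filter.Tendsto δ Filter.atTop (nhds 0) := by
  set F : ℕ → ℝ := fun k => ((k : ℝ) + 1 + 2 * α) ^ (2 * α) * E k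
  have hF : ∀ k, 0 ≤ F k := fun k => mul_nonneg (by positivity) (hE k)
  have hweight (k : ℕ) : (((k + 1 : ℕ) : ℝ) + 1 + 2 * α) ^ (2 * α)
      ≤ ((k : ℝ) + 1 + 2 * α) ^ (2 * α) * (1 + 2 * α / ((k : ℝ) + 1)) := by
    have := rpow_add_one_le_rpow_mul_one_add_div (t := (k : ℝ) + 1) (by positivity)
      (by positivity : 0 ≤ 2 * α)
    push_cast
    convert this using 2; ring
  have hle (k : ℕ) : δ k ≤ F k - F (k + 1) := by
    have := mul_le_mul_of_nonneg_right (hweight k) (hE (k + 1))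
    linarith [hrec k]
  have hsum := summable_of_le_sub_succ hδ hF hle
  exact ⟨hsum, hsum.tendsto_atTop_zero⟩
end

section
/- Let f : H → ℝ be convex and L-smooth, g : H → ℝ ∪ {∞} proper convex lsc, F = f + g with minimum F*, 0 < s ≤ 1/L, and G_s(x) = (x − prox_{sg}(x − s∇f(x)))/s. If F satisfies the Polyak–Łojasiewicz inequality with constant μ > 0 (dist(0, ∂F(y))² ≥ 2μ(F(y) − F*) for all y ∈ dom ∂F), then for every x ∈ H: ‖G_s(x)‖² ≥ 2μ(F(x − sG_s(x)) − F*). -/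
/-!
The optimality condition of the proximal step says that `G - ∇f(x)` is a subgradient of `g` at
`y = x - s G`, hence `ξ = G - (∇f(x) - ∇f(y))` is a subgradient of `F = f + g` at `y`. Convexity and
`L`-Lipschitz continuity of `∇f` give the cocoercivity bound `‖Δ‖² / (2L) ≤ ⟪Δ, x - y⟫` for
`Δ = ∇f(x) - ∇f(y)` (the constant `1/(2L)` rather than `1/L` avoids integrating along segments and
still suffices), and with `x - y = s G`, `s L ≤ 1` this yields `‖Δ‖² ≤ 2⟪G, Δ⟫`, i.e. `‖ξ‖ ≤ ‖G‖`.
The Polyak–Łojasiewicz inequality at `y` finishes the proof.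
-/

open scoped RealInnerProductSpace

section

variable {H : Type*} [NormedAddCommGroup H] [InnerProductSpace ℝ H]

def IsSubgradient (F : H → ℝ) (ξ y : H) : Prop := ∀ u, F y + ⟪ξ, u - y⟫ ≤ F u

theorem IsSubgradient.add {F₁ F₂ : H → ℝ} {ξ₁ ξ₂ y : H} (h₁ : IsSubgradient F₁ ξ₁ y)
    (h₂ : IsSubgradient F₂ ξ₂ y) : IsSubgradient (fun u => F₁ u + F₂ u) (ξ₁ + ξ₂) y := by
  intro u
  rw [inner_add_left]
  linarith [h₁ u, h₂ u]

theorem le_of_forall_mem_Ioc_le_add_mul {a b c : ℝ}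
    (h : ∀ t ∈ Set.Ioc (0 : ℝ) 1, a ≤ b + t * c) : a ≤ b := by
  have hlim : Filter.Tendsto (fun t : ℝ => b + t * c) (nhdsWithin 0 (Set.Ioi 0)) (nhds b) := by
    have : Continuous fun t : ℝ => b + t * c := by fun_prop
    simpa using (this.tendsto 0).mono_left nhdsWithin_le_nhds
  exact ge_of_tendsto hlim (Filter.mem_of_superset (Ioc_mem_nhdsGT one_pos) h)

theorem ConvexOn.isSubgradient_of_hasGradientAt [CompleteSpace H] {f : H → ℝ} {a v : H}
    (hf : ConvexOn ℝ Set.univ f) (hv : HasGradientAt f v a) : IsSubgradient f v a := by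
  intro b
  let q : ℝ → ℝ := fun t => f (AffineMap.lineMap a b t)
  have hq : ConvexOn ℝ Set.univ q := by
    simpa [q, Function.comp_def] using hf.comp_affineMap (AffineMap.lineMap a b : ℝ →ᵃ[ℝ] H)
  have hq' : HasDerivAt q ⟪v, b - a⟫ 0 := by
    have hline : HasDerivAt (fun t : ℝ => AffineMap.lineMap a b t) (b - a) 0 := by
      simpa using AffineMap.hasDerivAt_lineMap (a := a) (b := b) (x := 0)
    have := hv.hasFDerivAt.comp_hasDerivAt_of_eq 0 hline (by simp)
    simpa [q, Function.comp_def, InnerProductSpace.toDual_apply_apply] using this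
  have := hq.le_slope_of_hasDerivAt (Set.mem_univ 0) (Set.mem_univ 1) one_pos hq'
  simp [q, slope_def_field] at this
  linarith

theorem ConvexOn.isSubgradient_of_forall_le_add_norm_sq {g : H → ℝ} {w p : H} {s : ℝ}
    (hg : ConvexOn ℝ Set.univ g) (hs : 0 < s)
    (hp : ∀ u, g p + ‖p - w‖ ^ 2 / (2 * s) ≤ g u + ‖u - w‖ ^ 2 / (2 * s)) :
    IsSubgradient g (s⁻¹ • (w - p)) p := by
  -- compare `p` with `p + t • (u - p)`, divide by `t` and let `t → 0⁺`
  intro u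
  refine le_of_forall_mem_Ioc_le_add_mul (c := ‖u - p‖ ^ 2 / (2 * s)) fun t ⟨ht0, ht1⟩ => ?_
  have hconv : g (p + t • (u - p)) ≤ (1 - t) * g p + t * g u := by
    have := hg.2 (Set.mem_univ p) (Set.mem_univ u) (sub_nonneg.2 ht1) ht0.le (sub_add_cancel 1 t)
    rwa [show (1 - t) • p + t • u = p + t • (u - p) by module] at this
  have hmin := hp (p + t • (u - p))
  have hexp : ‖p + t • (u - p) - w‖ ^ 2
      = ‖p - w‖ ^ 2 + 2 * t * ⟪p - w, u - p⟫ + t ^ 2 * ‖u - p‖ ^ 2 := by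
    rw [show p + t • (u - p) - w = (p - w) + t • (u - p) by abel, norm_add_sq_real,
      inner_smul_right, norm_smul, mul_pow, Real.norm_eq_abs, sq_abs]
    ring
  have hξ : ⟪s⁻¹ • (w - p), u - p⟫ = -(⟪p - w, u - p⟫ / s) := by
    rw [inner_smul_left, ← neg_sub p w, inner_neg_left]
    simp [div_eq_inv_mul]
  rw [hexp] at hmin
  rw [hξ]
  have key : t * (g p - ⟪p - w, u - p⟫ / s) ≤ t * (g u + t * (‖u - p‖ ^ 2 / (2 * s))) := by
    have : t * (g p - ⟪p - w, u - p⟫ / s) - t * (g u + t * (‖u - p‖ ^ 2 / (2 * s)))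
        = (g p + ‖p - w‖ ^ 2 / (2 * s)) - ((1 - t) * g p + t * g u
          + (‖p - w‖ ^ 2 + 2 * t * ⟪p - w, u - p⟫ + t ^ 2 * ‖u - p‖ ^ 2) / (2 * s)) := by
      field_simp
      ring
    linarith
  have := le_of_mul_le_mul_left key ht0
  linarith

theorem le_add_inner_add_mul_norm_sq {f : H → ℝ} {f' : H → H} {L : ℝ}
    (hsub : ∀ z, IsSubgradient f (f' z) z) (hlip : ∀ a b, ‖f' a - f' b‖ ≤ L * ‖a - b‖)
    (y z : H) : f z ≤ f y + ⟪f' y, z - y⟫ + L * ‖z - y‖ ^ 2 := by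
  have hz := hsub z y
  rw [← neg_sub z y, inner_neg_right] at hz
  calc f z ≤ f y + ⟪f' y, z - y⟫ + ⟪f' z - f' y, z - y⟫ := by rw [inner_sub_left]; linarith
    _ ≤ f y + ⟪f' y, z - y⟫ + ‖f' z - f' y‖ * ‖z - y‖ := by gcongr; exact real_inner_le_norm _ _
    _ ≤ f y + ⟪f' y, z - y⟫ + L * ‖z - y‖ ^ 2 := by
      rw [sq, ← mul_assoc]; gcongr; exact hlip z y

theorem add_inner_add_norm_sq_div_le {f : H → ℝ} {f' : H → H} {L : ℝ} (hL : 0 < L)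
    (hsub : ∀ z, IsSubgradient f (f' z) z) (hlip : ∀ a b, ‖f' a - f' b‖ ≤ L * ‖a - b‖)
    (a b : H) : f b + ⟪f' b, a - b⟫ + ‖f' a - f' b‖ ^ 2 / (4 * L) ≤ f a := by
  set d := f' a - f' b
  -- `z` minimises the quadratic upper bound of `le_add_inner_add_mul_norm_sq` around `a`
  set z := a - (2 * L)⁻¹ • d
  have hb := hsub b z
  have ha := le_add_inner_add_mul_norm_sq hsub hlip a z
  have hza : z - a = -((2 * L)⁻¹ • d) := by simp [z]
  have hzb : z - b = (a - b) - (2 * L)⁻¹ • d := by simp [z]; abel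
  rw [hza, inner_neg_right, inner_smul_right, norm_neg, norm_smul,
    Real.norm_of_nonneg (by positivity)] at ha
  rw [hzb, inner_sub_right, inner_smul_right] at hb
  have hd : ⟪f' a, d⟫ - ⟪f' b, d⟫ = ‖d‖ ^ 2 := by
    rw [← inner_sub_left, real_inner_self_eq_norm_sq]
  have : (2 * L)⁻¹ * ⟪f' a, d⟫ - (2 * L)⁻¹ * ⟪f' b, d⟫ - L * ((2 * L)⁻¹ * ‖d‖) ^ 2
      = ‖d‖ ^ 2 / (4 * L) := by
    rw [← mul_sub, hd]; field_simp; ring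
  linarith

theorem norm_sq_div_le_inner_sub {f : H → ℝ} {f' : H → H} {L : ℝ} (hL : 0 < L)
    (hsub : ∀ z, IsSubgradient f (f' z) z) (hlip : ∀ a b, ‖f' a - f' b‖ ≤ L * ‖a - b‖)
    (a b : H) : ‖f' a - f' b‖ ^ 2 / (2 * L) ≤ ⟪f' a - f' b, a - b⟫ := by
  have hab := add_inner_add_norm_sq_div_le hL hsub hlip a b
  have hba := add_inner_add_norm_sq_div_le hL hsub hlip b a
  rw [norm_sub_rev, ← neg_sub a b, inner_neg_right] at hba
  have : ‖f' a - f' b‖ ^ 2 / (2 * L)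
      = ‖f' a - f' b‖ ^ 2 / (4 * L) + ‖f' a - f' b‖ ^ 2 / (4 * L) := by
    field_simp; ring
  rw [this, inner_sub_left]
  linarith

theorem norm_sub_sq_le_of_le_inner {G Δ : H} {s L : ℝ} (hs : 0 < s) (hL : 0 < L)
    (hsL : s ≤ 1 / L) (h : ‖Δ‖ ^ 2 / (2 * L) ≤ ⟪Δ, s • G⟫) : ‖G - Δ‖ ^ 2 ≤ ‖G‖ ^ 2 := by
  have hΔ : s * (‖Δ‖ ^ 2 / 2) ≤ s * ⟪G, Δ⟫ :=
    calc s * (‖Δ‖ ^ 2 / 2) ≤ 1 / L * (‖Δ‖ ^ 2 / 2) := by gcongr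
      _ = ‖Δ‖ ^ 2 / (2 * L) := by field_simp
      _ ≤ s * ⟪G, Δ⟫ := by rwa [real_inner_comm, ← inner_smul_right]
  have := le_of_mul_le_mul_left hΔ hs
  rw [norm_sub_sq_real]
  linarith

end

theorem stmt11_general {H : Type*} [NormedAddCommGroup H] [InnerProductSpace ℝ H] [CompleteSpace H]
    (f : H → ℝ) (f' : H → H) (g : H → ℝ) (μ L s Fstar : ℝ)
    (hL : 0 < L) (hs : 0 < s) (hsL : s ≤ 1 / L)
    (hconv : ConvexOn ℝ Set.univ f)
    (hgrad : ∀ z, HasGradientAt f (f' z) z)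
    (hlip : ∀ a b, ‖f' a - f' b‖ ≤ L * ‖a - b‖)
    (hg : ConvexOn ℝ Set.univ g)
    (hPL : ∀ y ξ, (∀ u, f u + g u ≥ f y + g y + ⟪ξ, u - y⟫) →
      ‖ξ‖ ^ 2 ≥ 2 * μ * (f y + g y - Fstar))
    (x p : H)
    (hprox : ∀ u, g p + ‖p - (x - s • f' x)‖ ^ 2 / (2 * s) ≤
      g u + ‖u - (x - s • f' x)‖ ^ 2 / (2 * s))
    (G : H) (hG : G = s⁻¹ • (x - p)) :
    ‖G‖ ^ 2 ≥ 2 * μ * (f (x - s • G) + g (x - s • G) - Fstar) := by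
  have hsG : s • G = x - p := by rw [hG, smul_smul, mul_inv_cancel₀ hs.ne', one_smul]
  have hsubf : ∀ z, IsSubgradient f (f' z) z :=
    fun z => hconv.isSubgradient_of_hasGradientAt (hgrad z)
  have hsubg : IsSubgradient g (G - f' x) p := by
    convert hg.isSubgradient_of_forall_le_add_norm_sq hs hprox using 1
    rw [hG, smul_sub, smul_sub, smul_sub, smul_smul, inv_mul_cancel₀ hs.ne', one_smul,
      sub_right_comm]
  have hsubF : IsSubgradient (fun u => f u + g u) (G - (f' x - f' p)) p := by
    convert (hsubf p).add hsubg using 1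
    abel
  have hnorm : ‖G - (f' x - f' p)‖ ^ 2 ≤ ‖G‖ ^ 2 := by
    refine norm_sub_sq_le_of_le_inner hs hL hsL ?_
    rw [hsG]
    exact norm_sq_div_le_inner_sub hL hsubf hlip x p
  rw [hsG, sub_sub_cancel]
  exact hnorm.trans' (hPL p _ hsubF)

theorem stmt11 {H : Type*} [NormedAddCommGroup H] [InnerProductSpace ℝ H] [CompleteSpace H]
    (f : H → ℝ) (f' : H → H) (g : H → ℝ) (μ L s Fstar : ℝ)
    (hμ : 0 < μ) (hL : 0 < L) (hs : 0 < s) (hsL : s ≤ 1 / L)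
    (hconv : ConvexOn ℝ Set.univ f)
    (hgrad : ∀ z, HasGradientAt f (f' z) z)
    (hlip : ∀ a b, ‖f' a - f' b‖ ≤ L * ‖a - b‖)
    (hg : ConvexOn ℝ Set.univ g) (hglsc : LowerSemicontinuous g)
    (hlb : ∀ u, Fstar ≤ f u + g u) (hatt : ∃ u, f u + g u = Fstar)
    (hPL : ∀ y ξ, (∀ u, f u + g u ≥ f y + g y + ⟪ξ, u - y⟫) →
      ‖ξ‖ ^ 2 ≥ 2 * μ * (f y + g y - Fstar))
    (x p : H)
    (hprox : ∀ u, g p + ‖p - (x - s • f' x)‖ ^ 2 / (2 * s) ≤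
      g u + ‖u - (x - s • f' x)‖ ^ 2 / (2 * s))
    (G : H) (hG : G = s⁻¹ • (x - p)) :
    ‖G‖ ^ 2 ≥ 2 * μ * (f (x - s • G) + g (x - s • G) - Fstar) :=
  stmt11_general f f' g μ L s Fstar hL hs hsL hconv hgrad hlip hg hPL x p hprox G hG
end

section
/- Let H be a real Hilbert space and f : H → ℝ twice continuously differentiable. Suppose x : (0,∞) → H is twice differentiable and solves ẍ + (α/t)ẋ + β∇²f(x)ẋ + (γ + αβ/t)∇f(x) = 0, with α, β, γ > 0. Define ε(t) = (1/2)‖ẋ(t) + β∇f(x(t))‖² + γ(f(x(t)) − f*). Then for all t > 0, ε'(t) = −(α/t)‖ẋ(t) + β∇f(x(t))‖² − βγ‖∇f(x(t))‖². -/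
/-!
With `w = ẋ + β ∇f(x)` the equation is the first-order system `ẇ = -(α/t) w - γ ∇f(x)`, since
`d/dt ∇f(x) = ∇²f(x) ẋ`. Hence `ε' = ⟪w, ẇ⟫ + γ ⟪∇f(x), ẋ⟫ = -(α/t) ‖w‖² - γ ⟪∇f(x), w - ẋ⟫`,
and `w - ẋ = β ∇f(x)`.
-/

open scoped RealInnerProductSpace

section

variable {H : Type*} [NormedAddCommGroup H] [InnerProductSpace ℝ H]

theorem inner_add_smul_add_mul_inner_eq {v g w' : H} {β γ c : ℝ}
    (hw' : w' = -(c • (v + β • g)) - γ • g) :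
    ⟪v + β • g, w'⟫ + γ * ⟪g, v⟫ = -c * ‖v + β • g‖ ^ 2 - β * γ * ‖g‖ ^ 2 := by
  subst hw'
  rw [← real_inner_self_eq_norm_sq, ← real_inner_self_eq_norm_sq]
  simp only [inner_sub_right, inner_neg_right, real_inner_smul_right, inner_add_left,
    real_inner_smul_left, real_inner_comm v g]
  ring

variable [CompleteSpace H]

theorem HasGradientAt.comp_hasDerivAt {f : H → ℝ} {g : H} {x : ℝ → H} {v : H} {t : ℝ}
    (hf : HasGradientAt f g (x t)) (hx : HasDerivAt x v t) :
    HasDerivAt (fun τ => f (x τ)) ⟪g, v⟫ t := by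
  have := hf.hasFDerivAt.comp_hasDerivAt t hx
  simp only [InnerProductSpace.toDual_apply_apply] at this
  exact this

theorem hasDerivAt_half_norm_sq_add_mul_sub {f : H → ℝ} {w : ℝ → H} {x : ℝ → H}
    {g w' v : H} {γ c t : ℝ} (hf : HasGradientAt f g (x t)) (hx : HasDerivAt x v t)
    (hw : HasDerivAt w w' t) :
    HasDerivAt (fun τ => (1 / 2) * ‖w τ‖ ^ 2 + γ * (f (x τ) - c)) (⟪w t, w'⟫ + γ * ⟪g, v⟫) t := by
  refine ((hw.norm_sq.const_mul (1 / 2)).add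
    (((hf.comp_hasDerivAt hx).sub_const c).const_mul γ)).congr_deriv ?_
  ring

end

theorem stmt17_general {H : Type*} [NormedAddCommGroup H] [InnerProductSpace ℝ H] [CompleteSpace H]
    (f : H → ℝ) (f' : H → H) (f'' : H → H →L[ℝ] H) (α β γ fstar : ℝ)
    (hgrad : ∀ z, HasGradientAt f (f' z) z)
    (hhess : ∀ z, HasFDerivAt f' (f'' z) z)
    (x v a : ℝ → H)
    (hx : ∀ t > (0 : ℝ), HasDerivAt x (v t) t)
    (hv : ∀ t > (0 : ℝ), HasDerivAt v (a t) t)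
    (hode : ∀ t > (0 : ℝ),
      a t + (α / t) • v t + β • (f'' (x t)) (v t) + (γ + α * β / t) • f' (x t) = 0) :
    ∀ t > (0 : ℝ),
      HasDerivAt (fun τ => (1 / 2) * ‖v τ + β • f' (x τ)‖ ^ 2 + γ * (f (x τ) - fstar))
        (-(α / t) * ‖v t + β • f' (x t)‖ ^ 2 - β * γ * ‖f' (x t)‖ ^ 2) t := by
  intro t ht
  have hw : HasDerivAt (fun τ => v τ + β • f' (x τ)) (a t + β • f'' (x t) (v t)) t :=
    (hv t ht).add (((hhess (x t)).comp_hasDerivAt t (hx t ht)).const_smul β)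
  have hfirst : a t + β • f'' (x t) (v t) = -((α / t) • (v t + β • f' (x t))) - γ • f' (x t) := by
    rw [← sub_eq_zero, ← hode t ht]
    module
  rw [← inner_add_smul_add_mul_inner_eq hfirst]
  exact hasDerivAt_half_norm_sq_add_mul_sub (hgrad (x t)) (hx t ht) hw

theorem stmt17 {H : Type*} [NormedAddCommGroup H] [InnerProductSpace ℝ H] [CompleteSpace H]
    (f : H → ℝ) (f' : H → H) (f'' : H → H →L[ℝ] H) (α β γ fstar : ℝ)
    (hα : 0 < α) (hβ : 0 < β) (hγ : 0 < γ)
    (hgrad : ∀ z, HasGradientAt f (f' z) z)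
    (hhess : ∀ z, HasFDerivAt f' (f'' z) z)
    (hlb : ∀ z, fstar ≤ f z) (hatt : ∃ z, f z = fstar)
    (x v a : ℝ → H)
    (hx : ∀ t > (0 : ℝ), HasDerivAt x (v t) t)
    (hv : ∀ t > (0 : ℝ), HasDerivAt v (a t) t)
    (hode : ∀ t > (0 : ℝ),
      a t + (α / t) • v t + β • (f'' (x t)) (v t) + (γ + α * β / t) • f' (x t) = 0) :
    ∀ t > (0 : ℝ),
      HasDerivAt (fun τ => (1 / 2) * ‖v τ + β • f' (x τ)‖ ^ 2 + γ * (f (x τ) - fstar))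
        (-(α / t) * ‖v t + β • f' (x t)‖ ^ 2 - β * γ * ‖f' (x t)‖ ^ 2) t :=
  stmt17_general f f' f'' α β γ fstar hgrad hhess x v a hx hv hode
end

section
/- Let f : H → ℝ be twice differentiable satisfying the PŁ inequality ‖∇f(x)‖² ≥ 2μ(f(x) − f*) with μ > 0, and let x solve ẍ + (α/t)ẋ + β∇²f(x)ẋ + (γ + αβ/t)∇f(x) = 0 with α, β, γ > 0 and initial velocity ẋ(0) = −β∇f(x(0)). Then f(x(t)) − f* ≤ (f(x₀) − f*) e^{−2μβt} for t ≤ α/(μβ), and f(x(t)) − f* ≤ (f(x₀) − f*)(α/(μβe))^{2α} t^{−2α} for t > α/(μβ). -/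
/-!
The equation says `w = ẋ + β∇f(x)` satisfies `ẇ = -(α/t) w - γ∇f(x)`, so the energy
`ε = ½‖w‖² + γ(f(x) - f*)` has derivative `-(α/t)‖w‖² - γβ‖∇f(x)‖²`.
With the PŁ inequality this gives `ε' ≤ -2 min(α/t, μβ) ε`. The integrating factor `exp(2μβt)`
turns this into exponential decay up to `t₁ = α/(μβ)`, and `t^(2α)` into decay like `t^(-2α)`
afterwards; the initial velocity makes `ε(0) = γ(f(x₀) - f*)`.
-/

open Set Real RealInnerProductSpace

theorem antitoneOn_mul_of_hasDerivAt_le_neg_mul {E E' g k : ℝ → ℝ} {a b : ℝ}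
    (hE : ContinuousOn E (Icc a b)) (hE' : ∀ s ∈ Ioo a b, HasDerivAt E (E' s) s)
    (hg : ∀ s ∈ Icc a b, HasDerivAt g (k s * g s) s) (hg₀ : ∀ s ∈ Ioo a b, 0 ≤ g s)
    (hle : ∀ s ∈ Ioo a b, E' s ≤ -(k s * E s)) :
    AntitoneOn (fun s => E s * g s) (Icc a b) := by
  refine antitoneOn_of_hasDerivWithinAt_nonpos (f' := fun s => E' s * g s + E s * (k s * g s))
    (convex_Icc a b) (hE.mul fun s hs => (hg s hs).continuousAt.continuousWithinAt)
    (fun s hs => ?_) fun s hs => ?_ <;> rw [interior_Icc] at hs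
  · exact ((hE' s hs).mul (hg s (Ioo_subset_Icc_self hs))).hasDerivWithinAt
  · rw [show E' s * g s + E s * (k s * g s) = g s * (E' s + k s * E s) by ring]
    exact mul_nonpos_of_nonneg_of_nonpos (hg₀ s hs) (by linarith [hle s hs])

theorem le_mul_exp_of_hasDerivAt_le_neg_mul {E E' : ℝ → ℝ} {a b c : ℝ} (hab : a ≤ b)
    (hE : ContinuousOn E (Icc a b)) (hE' : ∀ s ∈ Ioo a b, HasDerivAt E (E' s) s)
    (hle : ∀ s ∈ Ioo a b, E' s ≤ -(c * E s)) :
    E b ≤ E a * exp (-(c * (b - a))) := by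
  have hg : ∀ s ∈ Icc a b, HasDerivAt (fun s => exp (c * s)) (c * exp (c * s)) s :=
    fun s _ => by simpa [mul_comm] using ((hasDerivAt_id s).const_mul c).exp
  have h := antitoneOn_mul_of_hasDerivAt_le_neg_mul hE hE' hg (fun s _ => (exp_pos _).le) hle
    (left_mem_Icc.mpr hab) (right_mem_Icc.mpr hab) hab
  rw [mul_sub, neg_sub, sub_eq_add_neg, exp_add, ← mul_assoc, exp_neg, ← div_eq_mul_inv,
    le_div_iff₀ (exp_pos _)]
  exact h

theorem le_mul_div_rpow_of_hasDerivAt_le_neg_mul {E E' : ℝ → ℝ} {a b p : ℝ} (ha : 0 < a)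
    (hab : a ≤ b) (hE : ContinuousOn E (Icc a b))
    (hE' : ∀ s ∈ Ioo a b, HasDerivAt E (E' s) s) (hle : ∀ s ∈ Ioo a b, E' s ≤ -(p / s * E s)) :
    E b ≤ E a * (a / b) ^ p := by
  have hpos : ∀ s ∈ Icc a b, 0 < s := fun s hs => ha.trans_le hs.1
  have hg : ∀ s ∈ Icc a b, HasDerivAt (fun s => s ^ p) (p / s * s ^ p) s := fun s hs => by
    convert hasDerivAt_rpow_const (p := p) (Or.inl (hpos s hs).ne') using 1
    rw [rpow_sub_one (hpos s hs).ne']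
    ring
  have h := antitoneOn_mul_of_hasDerivAt_le_neg_mul hE hE' hg
    (fun s hs => (rpow_pos_of_pos (hpos s (Ioo_subset_Icc_self hs)) p).le) hle
    (left_mem_Icc.mpr hab) (right_mem_Icc.mpr hab) hab
  rw [div_rpow ha.le (ha.trans_le hab).le, ← mul_div_assoc,
    le_div_iff₀ (rpow_pos_of_pos (ha.trans_le hab) p)]
  exact h

section DissipationRate

variable {E E' : ℝ → ℝ} {α c t : ℝ}

theorem le_mul_exp_of_deriv_le_neg_two_min_mul (hc : 0 < c) (hE : ContinuousOn E (Ici 0))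
    (hE' : ∀ s > 0, HasDerivAt E (E' s) s) (hle : ∀ s > 0, E' s ≤ -(2 * min (α / s) c * E s))
    (ht : 0 ≤ t) (htc : t ≤ α / c) :
    E t ≤ E 0 * exp (-(2 * c * t)) := by
  have hmin : ∀ s ∈ Ioo 0 t, min (α / s) c = c := fun s hs =>
    min_eq_right ((le_div_iff₀ hs.1).mpr ((le_div_iff₀' hc).mp (hs.2.le.trans htc)))
  simpa using le_mul_exp_of_hasDerivAt_le_neg_mul ht (hE.mono Icc_subset_Ici_self)
    (fun s hs => hE' s hs.1) fun s hs => (hle s hs.1).trans_eq <| by rw [hmin s hs]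

theorem le_mul_div_rpow_of_deriv_le_neg_two_min_mul (hα : 0 < α) (hc : 0 < c)
    (hE : ContinuousOn E (Ici 0)) (hE' : ∀ s > 0, HasDerivAt E (E' s) s)
    (hle : ∀ s > 0, E' s ≤ -(2 * min (α / s) c * E s)) (ht : α / c ≤ t) :
    E t ≤ E 0 * (α / (c * exp 1)) ^ (2 * α) / t ^ (2 * α) := by
  set t₁ := α / c
  have ht₁ : 0 < t₁ := div_pos hα hc
  have hmin : ∀ s ∈ Ioo t₁ t, min (α / s) c = α / s := fun s hs =>
    min_eq_left ((div_le_iff₀ (ht₁.trans hs.1)).mpr ((div_le_iff₀' hc).mp hs.1.le))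
  have hpow : E t ≤ E t₁ * (t₁ / t) ^ (2 * α) :=
    le_mul_div_rpow_of_hasDerivAt_le_neg_mul ht₁ ht (hE.mono fun s hs => ht₁.le.trans hs.1)
      (fun s hs => hE' s (ht₁.trans hs.1)) fun s hs => (hle s (ht₁.trans hs.1)).trans_eq <| by
        rw [hmin s hs]; ring
  have hexp : E t₁ ≤ E 0 * exp (-(2 * α)) := by
    simpa [t₁, mul_assoc, mul_div_cancel₀ α hc.ne'] using
      le_mul_exp_of_deriv_le_neg_two_min_mul hc hE hE' hle ht₁.le le_rfl
  have htpos : 0 < t := ht₁.trans_le ht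
  calc E t ≤ E 0 * exp (-(2 * α)) * (t₁ / t) ^ (2 * α) :=
        hpow.trans (mul_le_mul_of_nonneg_right hexp (by positivity))
    _ = E 0 * (α / (c * exp 1)) ^ (2 * α) / t ^ (2 * α) := by
      rw [← div_div, div_rpow ht₁.le htpos.le, div_rpow ht₁.le (exp_pos 1).le,
        exp_one_rpow, exp_neg]
      field_simp

end DissipationRate

section InertialEnergy

variable {H : Type*} [NormedAddCommGroup H] [InnerProductSpace ℝ H]

noncomputable def inertialEnergy (f : H → ℝ) (f' : H → H) (β γ fstar : ℝ) (x v : ℝ → H)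
    (t : ℝ) : ℝ :=
  (1 / 2) * ‖v t + β • f' (x t)‖ ^ 2 + γ * (f (x t) - fstar)

variable {f : H → ℝ} {f' : H → H} {f'' : H → H →L[ℝ] H} {β γ fstar : ℝ} {x v a : ℝ → H}
  {t : ℝ}

theorem mul_sub_le_inertialEnergy :
    γ * (f (x t) - fstar) ≤ inertialEnergy f f' β γ fstar x v t :=
  le_add_of_nonneg_left (by positivity)

theorem inertialEnergy_deriv_le {α μ : ℝ} (hβ : 0 ≤ β) (hγ : 0 ≤ γ)
    (hPL : ‖f' (x t)‖ ^ 2 ≥ 2 * μ * (f (x t) - fstar)) (hlb : fstar ≤ f (x t)) :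
    -(α / t) * ‖v t + β • f' (x t)‖ ^ 2 - γ * β * ‖f' (x t)‖ ^ 2 ≤
      -(2 * min (α / t) (μ * β) * inertialEnergy f f' β γ fstar x v t) := by
  unfold inertialEnergy
  have hr := min_le_left (α / t) (μ * β)
  have hm := min_le_right (α / t) (μ * β)
  nlinarith [mul_le_mul_of_nonneg_right hr (sq_nonneg ‖v t + β • f' (x t)‖),
    mul_le_mul_of_nonneg_left hPL (mul_nonneg hγ hβ),
    mul_le_mul_of_nonneg_left hm (mul_nonneg hγ (sub_nonneg.mpr hlb))]

variable [CompleteSpace H]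

theorem hasDerivAt_inertialEnergy (hf : HasGradientAt f (f' (x t)) (x t))
    (hf' : HasFDerivAt f' (f'' (x t)) (x t)) (hx : HasDerivAt x (v t) t)
    (hv : HasDerivAt v (a t) t) :
    HasDerivAt (inertialEnergy f f' β γ fstar x v)
      (⟪v t + β • f' (x t), a t + β • f'' (x t) (v t)⟫ + γ * ⟪f' (x t), v t⟫) t := by
  have hw : HasDerivAt (fun s => v s + β • f' (x s)) (a t + β • f'' (x t) (v t)) t :=
    hv.add ((hf'.comp_hasDerivAt t hx).const_smul β)
  have hfx : HasDerivAt (fun s => f (x s)) ⟪f' (x t), v t⟫ t :=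
    hf.hasFDerivAt.comp_hasDerivAt t hx
  exact ((hw.norm_sq.const_mul (1 / 2)).add ((hfx.sub_const fstar).const_mul γ)).congr_deriv
    (by ring)

theorem hasDerivAt_inertialEnergy_of_ode {α : ℝ} (hf : HasGradientAt f (f' (x t)) (x t))
    (hf' : HasFDerivAt f' (f'' (x t)) (x t)) (hx : HasDerivAt x (v t) t)
    (hv : HasDerivAt v (a t) t)
    (hode : a t + (α / t) • v t + β • f'' (x t) (v t) + (γ + α * β / t) • f' (x t) = 0) :
    HasDerivAt (inertialEnergy f f' β γ fstar x v)
      (-(α / t) * ‖v t + β • f' (x t)‖ ^ 2 - γ * β * ‖f' (x t)‖ ^ 2) t := by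
  have hacc : a t + β • f'' (x t) (v t) = -(α / t) • (v t + β • f' (x t)) - γ • f' (x t) := by
    linear_combination (norm := module) hode
  convert hasDerivAt_inertialEnergy hf hf' hx hv using 1
  rw [hacc, inner_sub_right, inner_smul_right, inner_smul_right, real_inner_self_eq_norm_sq,
    inner_add_left, inner_smul_left, real_inner_self_eq_norm_sq, real_inner_comm]
  simp only [RCLike.conj_to_real]
  ring

end InertialEnergy

theorem stmt18_general {H : Type*} [NormedAddCommGroup H] [InnerProductSpace ℝ H] [CompleteSpace H]
    (f : H → ℝ) (f' : H → H) (f'' : H → H →L[ℝ] H) (α β γ μ fstar : ℝ)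
    (hα : 0 < α) (hβ : 0 < β) (hγ : 0 < γ) (hμ : 0 < μ)
    (hgrad : ∀ z, HasGradientAt f (f' z) z)
    (hhess : ∀ z, HasFDerivAt f' (f'' z) z)
    (hlb : ∀ z, fstar ≤ f z)
    (hPL : ∀ z, ‖f' z‖ ^ 2 ≥ 2 * μ * (f z - fstar))
    (x v a : ℝ → H) (x0 : H)
    (hx : ∀ t, 0 ≤ t → HasDerivAt x (v t) t)
    (hv : ∀ t, 0 ≤ t → HasDerivAt v (a t) t)
    (hode : ∀ t > (0 : ℝ),
      a t + (α / t) • v t + β • (f'' (x t)) (v t) + (γ + α * β / t) • f' (x t) = 0)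
    (hx0 : x 0 = x0) (hv0 : v 0 = -β • f' x0) :
    ∀ t > (0 : ℝ),
      (t ≤ α / (μ * β) → f (x t) - fstar ≤ (f x0 - fstar) * Real.exp (-2 * μ * β * t)) ∧
      (α / (μ * β) < t →
        f (x t) - fstar ≤ (f x0 - fstar) * (α / (μ * β * Real.exp 1)) ^ (2 * α) / t ^ (2 * α)) := by
  intro t ht
  set E := inertialEnergy f f' β γ fstar x v
  have hμβ : 0 < μ * β := mul_pos hμ hβ
  have hcont : ContinuousOn E (Ici 0) := fun s hs =>
    (hasDerivAt_inertialEnergy (hgrad _) (hhess _) (hx s hs) (hv s hs)).continuousAt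
      |>.continuousWithinAt
  have hD := fun s (hs : s > 0) =>
    hasDerivAt_inertialEnergy_of_ode (γ := γ) (fstar := fstar) (hgrad _) (hhess _) (hx s hs.le)
      (hv s hs.le) (hode s hs)
  have hdiss := fun s (_ : s > 0) =>
    inertialEnergy_deriv_le (v := v) (t := s) (α := α) hβ.le hγ.le (hPL (x s)) (hlb (x s))
  have hE0 : E 0 = γ * (f x0 - fstar) := by simp [E, inertialEnergy, hx0, hv0]
  refine ⟨fun hle => le_of_mul_le_mul_left ?_ hγ, fun hlt => le_of_mul_le_mul_left ?_ hγ⟩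
  · calc γ * (f (x t) - fstar) ≤ E t := mul_sub_le_inertialEnergy
      _ ≤ E 0 * exp (-(2 * (μ * β) * t)) :=
        le_mul_exp_of_deriv_le_neg_two_min_mul hμβ hcont hD hdiss ht.le hle
      _ = _ := by rw [hE0]; ring_nf
  · calc γ * (f (x t) - fstar) ≤ E t := mul_sub_le_inertialEnergy
      _ ≤ E 0 * (α / (μ * β * exp 1)) ^ (2 * α) / t ^ (2 * α) :=
        le_mul_div_rpow_of_deriv_le_neg_two_min_mul hα hμβ hcont hD hdiss hlt.le
      _ = _ := by rw [hE0]; ring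

theorem stmt18 {H : Type*} [NormedAddCommGroup H] [InnerProductSpace ℝ H] [CompleteSpace H]
    (f : H → ℝ) (f' : H → H) (f'' : H → H →L[ℝ] H) (α β γ μ fstar : ℝ)
    (hα : 0 < α) (hβ : 0 < β) (hγ : 0 < γ) (hμ : 0 < μ)
    (hgrad : ∀ z, HasGradientAt f (f' z) z)
    (hhess : ∀ z, HasFDerivAt f' (f'' z) z)
    (hlb : ∀ z, fstar ≤ f z) (hatt : ∃ z, f z = fstar)
    (hPL : ∀ z, ‖f' z‖ ^ 2 ≥ 2 * μ * (f z - fstar))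
    (x v a : ℝ → H) (x0 : H)
    (hx : ∀ t, 0 ≤ t → HasDerivAt x (v t) t)
    (hv : ∀ t, 0 ≤ t → HasDerivAt v (a t) t)
    (hode : ∀ t > (0 : ℝ),
      a t + (α / t) • v t + β • (f'' (x t)) (v t) + (γ + α * β / t) • f' (x t) = 0)
    (hx0 : x 0 = x0) (hv0 : v 0 = -β • f' x0) :
    ∀ t > (0 : ℝ),
      (t ≤ α / (μ * β) → f (x t) - fstar ≤ (f x0 - fstar) * Real.exp (-2 * μ * β * t)) ∧
      (α / (μ * β) < t →
        f (x t) - fstar ≤ (f x0 - fstar) * (α / (μ * β * Real.exp 1)) ^ (2 * α) / t ^ (2 * α)) :=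
  stmt18_general f f' f'' α β γ μ fstar hα hβ hγ hμ hgrad hhess hlb hPL x v a x0 hx hv hode hx0 hv0
end
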